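/- arXiv:2106.05900 — 2 statements merged into one kernel-verified Lean document; each statement's English description precedes it below -/
import Mathlib

section
/- For independent standard normal random variables P and Q, the probability that sgn(P - Q/√(D-1)) = sgn(Q - P/√(D-1)) equals (1/π)·(π/2 - 2·arctan(1/√(D-1))), for any real D > 2. -/
/-!
Write `s = √(D - 1) > 1`. The two signs agree exactly on the open cone
`{x - y/s > 0, y - x/s > 0}`, on its negative, and at the origin. The standard Gaussian on the
plane is invariant under `p ↦ -p` and does not charge points, so the probability is twice that of
the cone. In polar coordinates the Gaussian is the product of the radial law `r exp (-r²/2) dr` and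
the uniform law on angles, and the cone consists of the angles in `(arctan s⁻¹, arctan s)`, an
interval of length `π/2 - 2 arctan s⁻¹`.
-/

open MeasureTheory ProbabilityTheory Real Set

local notation "γ₂" => Measure.prod (gaussianReal 0 1) (gaussianReal 0 1)

lemma Real.sign_eq_sign_iff (u v : ℝ) :
    Real.sign u = Real.sign v ↔ (0 < u ∧ 0 < v) ∨ (u < 0 ∧ v < 0) ∨ (u = 0 ∧ v = 0) := by
  rcases lt_trichotomy u 0 with hu | rfl | hu <;> rcases lt_trichotomy v 0 with hv | rfl | hv <;>
    simp [Real.sign_of_neg, Real.sign_of_pos, *, lt_asymm, ne_of_gt, ne_of_lt]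

lemma Real.mem_Ioo_arctan_iff {φ : ℝ} (hφ : φ ∈ Ioo (-(π / 2)) (π / 2)) (a b : ℝ) :
    φ ∈ Ioo (arctan a) (arctan b) ↔ tan φ ∈ Ioo a b := by
  conv_lhs => rw [← arctan_tan hφ.1 hφ.2]
  simp only [mem_Ioo, arctan_strictMono.lt_iff_lt]

lemma integral_Ioi_mul_exp_neg_sq_div_two : ∫ r in Ioi (0 : ℝ), r * rexp (-r ^ 2 / 2) = 1 := by
  have h := integral_mul_cexp_neg_mul_sq (b := 1 / 2) (by norm_num)
  have hf : (fun r : ℝ => (r : ℂ) * Complex.exp (-(1 / 2) * (r : ℂ) ^ 2)) =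
      fun r => ((r * rexp (-r ^ 2 / 2) : ℝ) : ℂ) := by
    funext r; push_cast; ring_nf
  rw [hf, integral_complex_ofReal] at h
  norm_num at h
  exact_mod_cast h

lemma lintegral_Ioi_mul_exp_neg_sq_div_two :
    ∫⁻ r in Ioi (0 : ℝ), ENNReal.ofReal (r * rexp (-r ^ 2 / 2)) = 1 := by
  rw [← ofReal_integral_eq_lintegral_ofReal, integral_Ioi_mul_exp_neg_sq_div_two,
    ENNReal.ofReal_one]
  · exact (integrable_mul_exp_neg_mul_sq (b := 1 / 2) (by norm_num)).integrableOn.congr_fun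
      (fun r _ => by ring_nf) measurableSet_Ioi
  · filter_upwards [ae_restrict_mem measurableSet_Ioi] with r hr
    exact mul_nonneg (le_of_lt hr) (exp_pos _).le

lemma gaussianReal_prod_eq_withDensity :
    γ₂ = volume.withDensity
      (fun p : ℝ × ℝ => ENNReal.ofReal ((2 * π)⁻¹ * rexp (-(p.1 ^ 2 + p.2 ^ 2) / 2))) := by
  refine Measure.prod_eq fun s t hs ht => ?_
  rw [withDensity_apply _ (hs.prod ht), Measure.volume_eq_prod, ← Measure.prod_restrict,
    gaussianReal_apply 0 one_ne_zero s, gaussianReal_apply 0 one_ne_zero t,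
    ← lintegral_prod_mul (measurable_gaussianPDF 0 1).aemeasurable
      (measurable_gaussianPDF 0 1).aemeasurable]
  congr 1 with p
  rw [gaussianPDF, gaussianPDF, ← ENNReal.ofReal_mul (gaussianPDFReal_nonneg _ _ _)]
  congr 1
  simp only [gaussianPDFReal, NNReal.coe_one, mul_one, sub_zero]
  rw [mul_mul_mul_comm, ← mul_inv, mul_self_sqrt (by positivity), ← exp_add]
  ring_nf

/-- In polar coordinates the density of `γ₂` on a cone factors as `r exp (-r²/2)`, whose integral
over `r > 0` is `1`, times the uniform density `(2π)⁻¹` on the angles of the cone. -/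
lemma gaussianReal_prod_cone {T : Set (ℝ × ℝ)} (hT : MeasurableSet T)
    (hcone : ∀ r : ℝ, 0 < r → ∀ p, r • p ∈ T ↔ p ∈ T) :
    γ₂ T = ENNReal.ofReal (2 * π)⁻¹ * volume ({φ | (cos φ, sin φ) ∈ T} ∩ Ioo (-π) π) := by
  set ρ : ℝ × ℝ → ENNReal :=
    fun p => ENNReal.ofReal ((2 * π)⁻¹ * rexp (-(p.1 ^ 2 + p.2 ^ 2) / 2))
  set A := {φ : ℝ | (cos φ, sin φ) ∈ T}
  have hA : MeasurableSet A := hT.preimage (by fun_prop)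
  have hpolar : ∀ q ∈ polarCoord.target,
      ENNReal.ofReal q.1 • T.indicator ρ (polarCoord.symm q) =
        ENNReal.ofReal (q.1 * rexp (-q.1 ^ 2 / 2)) *
          A.indicator (fun _ => ENNReal.ofReal (2 * π)⁻¹) q.2 := by
    rintro ⟨r, φ⟩ ⟨hr : 0 < r, -⟩
    have hsymm : polarCoord.symm (r, φ) = r • (cos φ, sin φ) := by
      simp [polarCoord_symm_apply]
    rw [hsymm]
    by_cases hφ : φ ∈ A
    · rw [indicator_of_mem ((hcone r hr _).2 hφ), indicator_of_mem hφ, smul_eq_mul,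
        ← ENNReal.ofReal_mul hr.le, ← ENNReal.ofReal_mul (mul_pos hr (exp_pos _)).le]
      have hsq : (r * cos φ) ^ 2 + (r * sin φ) ^ 2 = r ^ 2 := by
        rw [mul_pow, mul_pow, ← mul_add, cos_sq_add_sin_sq, mul_one]
      simp only [Prod.smul_fst, Prod.smul_snd, smul_eq_mul, hsq]
      ring_nf
    · rw [indicator_of_notMem (mt (hcone r hr _).1 hφ), indicator_of_notMem hφ, smul_zero,
        mul_zero]
  have htarget : polarCoord.target = Ioi 0 ×ˢ Ioo (-π) π := rfl
  rw [gaussianReal_prod_eq_withDensity, withDensity_apply _ hT, ← lintegral_indicator hT,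
    ← lintegral_comp_polarCoord_symm,
    setLIntegral_congr_fun polarCoord.open_target.measurableSet hpolar, htarget,
    Measure.volume_eq_prod, ← Measure.prod_restrict,
    lintegral_prod_mul (f := fun r => ENNReal.ofReal (r * rexp (-r ^ 2 / 2))) (by fun_prop)
      (measurable_const.indicator hA).aemeasurable,
    lintegral_Ioi_mul_exp_neg_sq_div_two, one_mul, lintegral_indicator_const hA,
    Measure.restrict_apply hA]

lemma gaussianReal_prod_neg (T : Set (ℝ × ℝ)) : γ₂ (-T) = γ₂ T := by
  have h : Measure.map Neg.neg γ₂ = γ₂ := by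
    rw [show (Neg.neg : ℝ × ℝ → ℝ × ℝ) = Prod.map Neg.neg Neg.neg from rfl,
      ← Measure.map_prod_map _ _ measurable_neg measurable_neg]
    simp [gaussianReal_map_neg]
  calc γ₂ (-T) = Measure.map (MeasurableEquiv.neg (ℝ × ℝ)) γ₂ T :=
        ((MeasurableEquiv.neg _).map_apply T).symm
    _ = γ₂ T := congrArg (fun m : Measure (ℝ × ℝ) => m T) h

def wedge (s : ℝ) : Set (ℝ × ℝ) := {p | 0 < p.1 - p.2 / s ∧ 0 < p.2 - p.1 / s}

lemma measurableSet_wedge (s : ℝ) : MeasurableSet (wedge s) :=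
  (measurableSet_lt measurable_const (measurable_fst.sub (measurable_snd.div_const s))).inter
    (measurableSet_lt measurable_const (measurable_snd.sub (measurable_fst.div_const s)))

lemma smul_mem_wedge_iff {s r : ℝ} (hr : 0 < r) (p : ℝ × ℝ) : r • p ∈ wedge s ↔ p ∈ wedge s := by
  simp only [wedge, mem_ofPred_eq, Prod.smul_fst, Prod.smul_snd, smul_eq_mul, mul_div_assoc,
    ← mul_sub, mul_pos_iff_of_pos_left hr]

lemma setOf_cos_sin_mem_wedge_inter_Ioo {s : ℝ} (hs : 1 < s) :
    {φ | (cos φ, sin φ) ∈ wedge s} ∩ Ioo (-π) π = Ioo (arctan s⁻¹) (arctan s) := by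
  have hs0 : 0 < s := one_pos.trans hs
  have key : ∀ φ, 0 < cos φ → ((cos φ, sin φ) ∈ wedge s ↔ tan φ ∈ Ioo s⁻¹ s) := by
    intro φ hc
    rw [wedge, mem_ofPred_eq, sub_pos, sub_pos, div_lt_iff₀ hs0, div_lt_iff₀ hs0,
      tan_eq_sin_div_cos, mem_Ioo, lt_div_iff₀ hc, div_lt_iff₀ hc, inv_mul_lt_iff₀ hs0]
    constructor <;> rintro ⟨h1, h2⟩ <;> constructor <;> linarith
  ext φ
  constructor
  · rintro ⟨hw, hlo, hhi⟩
    obtain ⟨h1, h2⟩ := id hw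
    rw [sub_pos, div_lt_iff₀ hs0] at h1 h2
    -- `cos φ < s sin φ < s² cos φ` with `s > 1`
    have hc : 0 < cos φ := by
      by_contra! hc
      nlinarith [mul_pos (sub_pos.2 h1) hs0,
        mul_nonneg (neg_nonneg.2 hc) (by nlinarith : 0 ≤ s * s - 1)]
    have hφ : φ ∈ Ioo (-(π / 2)) (π / 2) := by
      constructor
      · by_contra! h
        have := sin_nonpos_of_nonpos_of_neg_pi_le (by linarith [pi_pos]) hlo.le
        nlinarith
      · by_contra! h
        have := cos_nonpos_of_pi_div_two_le_of_le h (by linarith)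
        linarith
    exact (Real.mem_Ioo_arctan_iff hφ _ _).2 ((key φ hc).1 hw)
  · intro h
    have h0 : 0 < φ := (arctan_pos.2 (inv_pos.2 hs0)).trans h.1
    have hφ : φ ∈ Ioo (-(π / 2)) (π / 2) :=
      ⟨by linarith [pi_pos], h.2.trans (arctan_lt_pi_div_two s)⟩
    exact ⟨(key φ (cos_pos_of_mem_Ioo hφ)).2 ((Real.mem_Ioo_arctan_iff hφ _ _).1 h),
      by linarith [pi_pos], by linarith [hφ.2, pi_pos]⟩

lemma gaussianReal_prod_wedge {s : ℝ} (hs : 1 < s) :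
    γ₂ (wedge s) = ENNReal.ofReal ((2 * π)⁻¹ * (arctan s - arctan s⁻¹)) := by
  rw [gaussianReal_prod_cone (measurableSet_wedge s) fun r hr => smul_mem_wedge_iff hr,
    setOf_cos_sin_mem_wedge_inter_Ioo hs, volume_Ioo, ENNReal.ofReal_mul (by positivity)]

lemma setOf_sign_eq_sign {s : ℝ} (hs : 1 < s) :
    {p : ℝ × ℝ | Real.sign (p.1 - p.2 / s) = Real.sign (p.2 - p.1 / s)} =
      wedge s ∪ -wedge s ∪ {0} := by
  have hs0 : 0 < s := one_pos.trans hs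
  ext ⟨x, y⟩
  simp only [mem_ofPred_eq, Real.sign_eq_sign_iff, mem_union, wedge, mem_neg, Prod.fst_neg,
    Prod.snd_neg, mem_singleton_iff, Prod.mk_eq_zero, neg_div]
  constructor
  · rintro (h | ⟨h1, h2⟩ | ⟨h1, h2⟩)
    · exact Or.inl (Or.inl h)
    · exact Or.inl (Or.inr ⟨by linarith, by linarith⟩)
    · rw [sub_eq_zero, eq_div_iff hs0.ne'] at h1 h2
      have hx : x * (s * s - 1) = 0 := by linear_combination s * h1 + h2
      have hx0 : x = 0 := (mul_eq_zero.1 hx).resolve_right (by nlinarith)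
      exact Or.inr ⟨hx0, by rw [← h1, hx0, zero_mul]⟩
  · rintro ((h | ⟨h1, h2⟩) | ⟨rfl, rfl⟩)
    · exact Or.inl h
    · exact Or.inr (Or.inl ⟨by linarith, by linarith⟩)
    · simp

lemma gaussianReal_prod_wedge_union_neg_union_zero (s : ℝ) :
    γ₂ (wedge s ∪ -wedge s ∪ {0}) = 2 * γ₂ (wedge s) := by
  have : NullSingletonClass (gaussianReal 0 1) := nullSingletonClass_gaussianReal one_ne_zero
  have hdisj : Disjoint (wedge s) (-wedge s) := by
    rw [Set.disjoint_left]
    rintro p ⟨h, -⟩ ⟨h', -⟩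
    simp only [Prod.fst_neg, Prod.snd_neg, neg_div] at h'
    linarith
  rw [measure_congr (union_ae_eq_left_of_ae_eq_empty (ae_eq_empty.mpr (measure_singleton _))),
    measure_union hdisj (measurableSet_wedge s).neg, gaussianReal_prod_neg, two_mul]

lemma gaussianReal_prod_sign_eq_sign {s : ℝ} (hs : 1 < s) :
    (γ₂ {p : ℝ × ℝ | Real.sign (p.1 - p.2 / s) = Real.sign (p.2 - p.1 / s)}).toReal =
      π⁻¹ * (π / 2 - 2 * arctan s⁻¹) := by
  have hnonneg : 0 ≤ (2 * π)⁻¹ * (arctan s - arctan s⁻¹) :=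
    mul_nonneg (by positivity)
      (sub_nonneg.2 (arctan_strictMono ((inv_lt_one_of_one_lt₀ hs).trans hs)).le)
  rw [setOf_sign_eq_sign hs, gaussianReal_prod_wedge_union_neg_union_zero,
    gaussianReal_prod_wedge hs, ENNReal.toReal_mul, ENNReal.toReal_ofNat,
    ENNReal.toReal_ofReal hnonneg, arctan_inv_of_pos (one_pos.trans hs)]
  field_simp
  ring

theorem sign_prob_eq_general {Ω : Type*} [MeasurableSpace Ω] (μ : Measure Ω)
    (P Q : Ω → ℝ) (hPm : Measurable P) (hQm : Measurable Q)
    (hP : μ.map P = gaussianReal 0 1) (hQ : μ.map Q = gaussianReal 0 1)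
    (hind : IndepFun P Q μ) (D : ℝ) (hD : 2 < D) :
    (μ {ω | Real.sign (P ω - Q ω / Real.sqrt (D - 1)) =
        Real.sign (Q ω - P ω / Real.sqrt (D - 1))}).toReal =
      (1 / π) * (π / 2 - 2 * Real.arctan (1 / Real.sqrt (D - 1))) := by
  set s := √(D - 1)
  have hs : 1 < s := by rw [lt_sqrt zero_le_one]; linarith
  have hlaw : μ.map (fun ω => (P ω, Q ω)) = γ₂ := by
    rw [(indepFun_iff_map_prod_eq_prod_map_map' hPm.aemeasurable hQm.aemeasurable
      (by rw [hP]; infer_instance) (by rw [hQ]; infer_instance)).mp hind, hP, hQ]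
  have hmeas : MeasurableSet
      {p : ℝ × ℝ | Real.sign (p.1 - p.2 / s) = Real.sign (p.2 - p.1 / s)} := by
    rw [setOf_sign_eq_sign hs]
    exact ((measurableSet_wedge s).union (measurableSet_wedge s).neg).union
      (measurableSet_singleton 0)
  change (μ ((fun ω => (P ω, Q ω)) ⁻¹'
    {p : ℝ × ℝ | Real.sign (p.1 - p.2 / s) = Real.sign (p.2 - p.1 / s)})).toReal = _
  rw [← Measure.map_apply (hPm.prodMk hQm) hmeas, hlaw, gaussianReal_prod_sign_eq_sign hs,
    one_div, one_div]

theorem sign_prob_eq {Ω : Type*} [MeasurableSpace Ω] (μ : Measure Ω) [IsProbabilityMeasure μ]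
    (P Q : Ω → ℝ) (hPm : Measurable P) (hQm : Measurable Q)
    (hP : μ.map P = gaussianReal 0 1) (hQ : μ.map Q = gaussianReal 0 1)
    (hind : IndepFun P Q μ) (D : ℝ) (hD : 2 < D) :
    (μ {ω | Real.sign (P ω - Q ω / Real.sqrt (D - 1)) =
        Real.sign (Q ω - P ω / Real.sqrt (D - 1))}).toReal =
      (1 / π) * (π / 2 - 2 * Real.arctan (1 / Real.sqrt (D - 1))) :=
  sign_prob_eq_general μ P Q hPm hQm hP hQ hind D hD
end

section
/- For D ≥ 2, the identity 1/2 + (2/π)·arctan(1/√(D-1)) = arccos(-2√(D-1)/D)/π holds. -/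
/-!
With `x = 1 / √(D - 1)` one has `-2√(D - 1) / D = -2x / (1 + x²) = -sin (2 arctan x) = cos (2 arctan x + π/2)`,
and `D ≥ 2` means `x ≤ 1`, so `2 arctan x + π/2` lies in `[0, π]`, where `arccos` inverts `cos`.
-/

open Real

theorem sin_two_mul_arctan (x : ℝ) : sin (2 * arctan x) = 2 * x / (1 + x ^ 2) := by
  have hpos : 0 < 1 + x ^ 2 := by positivity
  rw [sin_two_mul, sin_arctan, cos_arctan]
  field_simp
  rw [sq_sqrt hpos.le]

theorem arctan_le_pi_div_four_of_le_one {x : ℝ} (hx : x ≤ 1) : arctan x ≤ π / 4 :=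
  arctan_one ▸ arctan_strictMono.monotone hx

theorem arccos_neg_two_mul_div_one_add_sq {x : ℝ} (hx₀ : 0 ≤ x) (hx₁ : x ≤ 1) :
    arccos (-(2 * x / (1 + x ^ 2))) = 2 * arctan x + π / 2 := by
  have h₀ : 0 ≤ arctan x := arctan_nonneg.mpr hx₀
  have h₁ : arctan x ≤ π / 4 := arctan_le_pi_div_four_of_le_one hx₁
  rw [← sin_two_mul_arctan, ← cos_add_pi_div_two, arccos_cos] <;> linarith [pi_pos]

theorem arctan_arccos_identity (D : ℝ) (hD : 2 ≤ D) :
    1 / 2 + (2 / π) * Real.arctan (1 / Real.sqrt (D - 1)) =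
      Real.arccos (-2 * Real.sqrt (D - 1) / D) / π := by
  set s := √(D - 1)
  have hs : 1 ≤ s := one_le_sqrt.mpr (by linarith)
  have hD_eq : D = s ^ 2 + 1 := by rw [sq_sqrt (by linarith)]; ring
  have hx : -2 * s / D = -(2 * (1 / s) / (1 + (1 / s) ^ 2)) := by
    rw [hD_eq]; field_simp
  rw [hx, arccos_neg_two_mul_div_one_add_sq (by positivity) ((div_le_one (by linarith)).mpr hs)]
  field_simp
  ring
end
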